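/- arXiv:2102.13363 — 4 statements merged into one kernel-verified Lean document; each statement's English description precedes it below -/
import Mathlib

section
/- If φ, ψ, χ are mutually independent and each uniformly distributed on [-επ, επ] with 0 < ε ≤ 1, then E[cos(φ - ψ)·cos(χ - φ)] = (1/2)·(1 + sinc(2ε))·sinc(ε)². -/
open MeasureTheory Real

/-- The normalized sinc function `sinc x = sin(πx)/(πx)`, with `sinc 0 = 1`. -/
noncomputable def sinc (x : ℝ) : ℝ := if x = 0 then 1 else Real.sin (π * x) / (π * x)

/-- The uniform probability measure on `[-επ, επ]`. -/
noncomputable def uniformPhase (ε : ℝ) : Measure ℝ :=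
  (ENNReal.ofReal (2 * ε * π))⁻¹ • volume.restrict (Set.Icc (-(ε * π)) (ε * π))

/-!
Integrating out `ψ` and `χ` first: for any law `μ` of a phase with `E[sin] = 0`, the addition
formula gives `E[cos(x - ψ)] = E[cos ψ] · cos x`, so for fixed `φ = x` the inner expectation
factors by independence into `sinc(ε)² cos² x`. It remains to average `cos² φ`, which by
`cos² = (1 + cos 2φ)/2` equals `(1 + sinc(2ε))/2`.
-/

lemma integrable_of_abs_le_one {α : Type*} [TopologicalSpace α] [MeasurableSpace α]
    [OpensMeasurableSpace α] {μ : Measure α} [IsFiniteMeasure μ] {f : α → ℝ} (hf : Continuous f)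
    (hbound : ∀ x, |f x| ≤ 1) : Integrable f μ :=
  .of_bound hf.aestronglyMeasurable 1 (ae_of_all _ hbound)

lemma integral_cos_sub_of_integral_sin_eq_zero (μ : Measure ℝ) [IsFiniteMeasure μ]
    (hsin : ∫ y, sin y ∂μ = 0) (x : ℝ) :
    ∫ y, cos (x - y) ∂μ = cos x * ∫ y, cos y ∂μ := by
  simp_rw [cos_sub]
  rw [integral_add ((integrable_of_abs_le_one continuous_cos abs_cos_le_one).const_mul _)
      ((integrable_of_abs_le_one continuous_sin abs_sin_le_one).const_mul _),
    integral_const_mul, integral_const_mul, hsin, mul_zero, add_zero]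

section uniformPhase

variable {ε : ℝ} (hε : 0 < ε)
include hε

lemma isProbabilityMeasure_uniformPhase : IsProbabilityMeasure (uniformPhase ε) := by
  have hlen : ε * π - -(ε * π) = 2 * ε * π := by ring
  constructor
  rw [uniformPhase, Measure.smul_apply, Measure.restrict_apply_univ, Real.volume_Icc, hlen,
    smul_eq_mul, ENNReal.inv_mul_cancel (by simp [hε, pi_pos]) ENNReal.ofReal_ne_top]

lemma integral_uniformPhase (f : ℝ → ℝ) :
    ∫ x, f x ∂uniformPhase ε = (2 * ε * π)⁻¹ * ∫ x in (-(ε * π))..(ε * π), f x := by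
  have hle : -(ε * π) ≤ ε * π := by nlinarith [pi_pos]
  rw [uniformPhase, integral_smul_measure, ENNReal.toReal_inv,
    ENNReal.toReal_ofReal (by positivity), intervalIntegral.integral_of_le hle,
    ← integral_Icc_eq_integral_Ioc, smul_eq_mul]

lemma integral_sin_uniformPhase : ∫ x, sin x ∂uniformPhase ε = 0 := by
  rw [integral_uniformPhase hε, integral_sin, cos_neg, sub_self, mul_zero]

lemma integral_cos_uniformPhase : ∫ x, cos x ∂uniformPhase ε = _root_.sinc ε := by
  have hεπ : ε * π ≠ 0 := by positivity
  rw [integral_uniformPhase hε, integral_cos, _root_.sinc, if_neg hε.ne', sin_neg, mul_comm π ε]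
  field_simp
  ring

lemma integral_cos_sq_uniformPhase :
    ∫ x, cos x ^ 2 ∂uniformPhase ε = (1 + _root_.sinc (2 * ε)) / 2 := by
  have hεπ : ε * π ≠ 0 := by positivity
  rw [integral_uniformPhase hε, integral_cos_sq, _root_.sinc, if_neg (by positivity),
    show π * (2 * ε) = 2 * (ε * π) by ring, sin_two_mul, cos_neg, sin_neg]
  field_simp
  ring

end uniformPhase

theorem expectation_cos_diff_mul_cos_diff_uniform_general (ε : ℝ) (hε : 0 < ε) :
    (∫ p : ℝ × ℝ × ℝ, Real.cos (p.1 - p.2.1) * Real.cos (p.2.2 - p.1)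
        ∂((uniformPhase ε).prod ((uniformPhase ε).prod (uniformPhase ε)))) =
      1 / 2 * (1 + _root_.sinc (2 * ε)) * _root_.sinc ε ^ 2 := by
  set μ := uniformPhase ε
  have := isProbabilityMeasure_uniformPhase hε
  have hcos_sub (x : ℝ) : ∫ y, cos (x - y) ∂μ = cos x * _root_.sinc ε := by
    rw [integral_cos_sub_of_integral_sin_eq_zero μ (integral_sin_uniformPhase hε),
      integral_cos_uniformPhase hε]
  have hinner (x : ℝ) :
      ∫ y : ℝ × ℝ, cos (x - y.1) * cos (y.2 - x) ∂μ.prod μ = _root_.sinc ε ^ 2 * cos x ^ 2 := by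
    rw [integral_prod_mul (fun y => cos (x - y)) (fun y => cos (y - x))]
    simp_rw [← neg_sub x, cos_neg, hcos_sub]
    ring
  have hint : Integrable (fun p : ℝ × ℝ × ℝ => cos (p.1 - p.2.1) * cos (p.2.2 - p.1))
      (μ.prod (μ.prod μ)) :=
    integrable_of_abs_le_one (by fun_prop) fun p => by
      rw [abs_mul]
      exact mul_le_one₀ (abs_cos_le_one _) (abs_nonneg _) (abs_cos_le_one _)
  rw [integral_prod _ hint]
  simp_rw [hinner]
  rw [integral_const_mul, integral_cos_sq_uniformPhase hε]
  ring

/-- If `φ, ψ, χ` are i.i.d. `Uniform(-επ, επ)` with `0 < ε ≤ 1`, then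
`E[cos(φ - ψ)·cos(χ - φ)] = (1/2)·(1 + sinc(2ε))·sinc(ε)²`. -/
theorem expectation_cos_diff_mul_cos_diff_uniform (ε : ℝ) (hε : 0 < ε) (hε1 : ε ≤ 1) :
    (∫ p : ℝ × ℝ × ℝ, Real.cos (p.1 - p.2.1) * Real.cos (p.2.2 - p.1)
        ∂((uniformPhase ε).prod ((uniformPhase ε).prod (uniformPhase ε)))) =
      1 / 2 * (1 + _root_.sinc (2 * ε)) * _root_.sinc ε ^ 2 :=
  expectation_cos_diff_mul_cos_diff_uniform_general ε hε
end

section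
/- If γ is Gamma distributed with shape α > 0 and rate β > 0, then E[log₂(1+γ)] = (β^α / (Γ(α) ln 2)) · ∑_{k=1}^∞ (Γ(k+α)/k) · U(k+α, 1+α, β), where U is the confluent hypergeometric function of the second kind defined by U(a,b,z) = (1/Γ(a)) ∫₀^∞ (1+u)^{b-a-1} u^{a-1} e^{-zu} du. -/
open MeasureTheory Real

/-- The Gamma(α, β) density `f(u) = β^α u^{α-1} e^{-βu} / Γ(α)` on `(0,∞)`. -/
noncomputable def gammaPDF (α β u : ℝ) : ℝ :=
  β ^ α * u ^ (α - 1) * Real.exp (-β * u) / Real.Gamma α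

/-- Tricomi's confluent hypergeometric function `U(a,b,z)` via its integral
representation: `U(a,b,z) = (1/Γ(a)) ∫₀^∞ (1+u)^{b-a-1} u^{a-1} e^{-zu} du`. -/
noncomputable def kummerU (a b z : ℝ) : ℝ :=
  (1 / Real.Gamma a) * ∫ u in Set.Ioi (0 : ℝ),
    (1 + u) ^ (b - a - 1) * u ^ (a - 1) * Real.exp (-z * u)

/-! The logarithmic series `log (1 + u) = ∑_{k ≥ 1} (u / (1 + u))^k / k`, valid for `u ≥ 0`, has
nonnegative terms, so it may be integrated termwise against the Gamma density (the sum is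
integrable since `log (1 + u) ≤ u`). Since `(u / (1 + u))^k u^{α-1} = (1 + u)^{-k} u^{k+α-1}`, the
`k`-th integral is the integral representation of `Γ(k + α) U(k + α, 1 + α, β)`. -/

theorem MeasureTheory.hasSum_integral_of_nonneg {α ι : Type*} [MeasurableSpace α]
    {μ : Measure α} [Countable ι] {F : ι → α → ℝ} {f : α → ℝ}
    (hF_meas : ∀ n, AEStronglyMeasurable (F n) μ) (hF_nonneg : ∀ n, ∀ᵐ a ∂μ, 0 ≤ F n a)
    (hf : Integrable f μ) (h_lim : ∀ᵐ a ∂μ, HasSum (fun n ↦ F n a) (f a)) :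
    HasSum (fun n ↦ ∫ a, F n a ∂μ) (∫ a, f a ∂μ) := by
  refine hasSum_integral_of_dominated_convergence F hF_meas (fun n ↦ ?_)
    (h_lim.mono fun a h ↦ h.summable) (hf.congr (h_lim.mono fun a h ↦ h.tsum_eq.symm)) h_lim
  filter_upwards [hF_nonneg n] with a ha
  rw [Real.norm_of_nonneg ha]

theorem Real.hasSum_div_one_add_pow_div_log_one_add {u : ℝ} (hu : 0 ≤ u) :
    HasSum (fun k : ℕ ↦ (u / (1 + u)) ^ (k + 1) / (k + 1)) (log (1 + u)) := by
  have hx : |u / (1 + u)| < 1 := by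
    rw [abs_of_nonneg (by positivity), div_lt_one (by positivity)]
    linarith
  have h : 1 - u / (1 + u) = (1 + u)⁻¹ := by field_simp; ring
  simpa only [h, log_inv, neg_neg] using hasSum_pow_div_log_of_abs_lt_one hx

theorem integrableOn_log_one_add_mul_rpow_mul_exp_neg_mul {α β : ℝ} (hα : -1 < α) (hβ : 0 < β) :
    IntegrableOn (fun u ↦ log (1 + u) * (u ^ (α - 1) * exp (-β * u))) (Set.Ioi 0) := by
  have hbound : IntegrableOn (fun u : ℝ ↦ u ^ α * exp (-β * u)) (Set.Ioi 0) := by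
    simpa only [rpow_one] using integrableOn_rpow_mul_exp_neg_mul_rpow hα one_pos hβ
  refine hbound.mono' (by fun_prop) ?_
  filter_upwards [ae_restrict_mem measurableSet_Ioi] with u (hu : 0 < u)
  have hlog_nonneg : 0 ≤ log (1 + u) := log_nonneg (by linarith)
  have hlog_le : log (1 + u) ≤ u := by linarith [log_le_sub_one_of_pos (by linarith : 0 < 1 + u)]
  have hpow : u * u ^ (α - 1) = u ^ α := by rw [mul_comm, ← rpow_add_one hu.ne', sub_add_cancel]
  rw [norm_of_nonneg (by positivity), ← hpow, mul_assoc]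
  gcongr

theorem integral_div_one_add_pow_mul_rpow_mul_exp_eq_Gamma_mul_kummerU (α z : ℝ) (n : ℕ)
    (h : 0 < n + α) :
    ∫ u in Set.Ioi (0 : ℝ), (u / (1 + u)) ^ n * u ^ (α - 1) * exp (-z * u) =
      Gamma (n + α) * kummerU (n + α) (1 + α) z := by
  rw [kummerU, ← mul_assoc, mul_one_div_cancel (Gamma_pos_of_pos h).ne', one_mul]
  refine setIntegral_congr_fun measurableSet_Ioi fun u (hu : 0 < u) ↦ ?_
  have h1u : 0 < 1 + u := by linarith
  rw [show 1 + α - (n + α) - 1 = -n by ring, show n + α - 1 = n + (α - 1) by ring,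
    rpow_neg h1u.le, rpow_add hu, rpow_natCast, rpow_natCast, div_pow]
  ring

/-- If `γ ~ Γ(α, β)` with `α, β > 0`, then
`E[log₂(1+γ)] = (β^α / (Γ(α) ln 2)) · ∑_{k=1}^∞ (Γ(k+α)/k) · U(k+α, 1+α, β)`. -/
theorem expectation_log_one_add_gamma (α β : ℝ) (hα : 0 < α) (hβ : 0 < β) :
    (∫ u in Set.Ioi (0 : ℝ), Real.logb 2 (1 + u) * gammaPDF α β u) =
      β ^ α / (Real.Gamma α * Real.log 2) *
        ∑' k : ℕ, Real.Gamma ((k + 1 : ℝ) + α) / (k + 1) *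
          kummerU ((k + 1 : ℝ) + α) (1 + α) β := by
  set g : ℝ → ℝ := fun u ↦ u ^ (α - 1) * exp (-β * u)
  have hseries : HasSum
      (fun k : ℕ ↦ ∫ u in Set.Ioi (0 : ℝ), (u / (1 + u)) ^ (k + 1) / (k + 1) * g u)
      (∫ u in Set.Ioi (0 : ℝ), log (1 + u) * g u) := by
    refine hasSum_integral_of_nonneg (fun k ↦ by fun_prop) (fun k ↦ ?_)
      (integrableOn_log_one_add_mul_rpow_mul_exp_neg_mul (by linarith) hβ) ?_
    all_goals filter_upwards [ae_restrict_mem measurableSet_Ioi] with u (hu : 0 < u)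
    · positivity
    · exact (hasSum_div_one_add_pow_div_log_one_add hu.le).mul_right (g u)
  calc (∫ u in Set.Ioi (0 : ℝ), logb 2 (1 + u) * gammaPDF α β u)
      = β ^ α / (Gamma α * log 2) * ∫ u in Set.Ioi (0 : ℝ), log (1 + u) * g u := by
        rw [← integral_const_mul]
        congr 1 with u
        simp only [logb, gammaPDF, g]
        ring
    _ = _ := by
        rw [← hseries.tsum_eq]
        congr 1
        refine tsum_congr fun k ↦ ?_
        have h := integral_div_one_add_pow_mul_rpow_mul_exp_eq_Gamma_mul_kummerU α β (k + 1)
          (by positivity)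
        push_cast at h
        simp only [g, div_mul_eq_mul_div, ← mul_assoc, integral_div, h]
end

section
/- If γ is Gamma distributed with shape α > 0 and rate β > 0, then ∫₀^∞ (1 - 1/(2(1+u)²)) f_γ(u) du = (1/2)·(2 - β + e^β · β · (α + β - 1) · E_α(β)), where E_α(z) = ∫₁^∞ e^{-zt} t^{-α} dt is the generalized exponential integral. -/
open MeasureTheory Real

/-- The generalized exponential integral `E_α(z) = ∫₁^∞ e^{-zt} t^{-α} dt`. -/
noncomputable def expInt (α z : ℝ) : ℝ :=
  ∫ t in Set.Ioi (1 : ℝ), Real.exp (-z * t) * t ^ (-α)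

/-!
Write `1 / (1 + u)² = β² ∫₀^∞ v e^{-β(1+u)v} dv` and exchange the integrals: the Laplace
transform `E[e^{-sγ}] = (β / (β + s))^α` of the Gamma law turns `E[(1 + γ)⁻²]` into
`β² ∫₀^∞ v e^{-βv} (1 + v)^{-α} dv = β² e^β (E_{α-1}(β) - E_α(β))`. The recurrence
`z E_p(z) + p E_{p+1}(z) = e^{-z}`, obtained by integrating `d(-e^{-zt} t^{-p})` over `(1, ∞)`,
eliminates `E_{α-1}`.
-/

open Set Filter Topology

lemma gammaPDF_nonneg {α β u : ℝ} (hα : 0 < α) (hβ : 0 ≤ β) (hu : 0 ≤ u) :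
    0 ≤ gammaPDF α β u := by
  have := Gamma_pos_of_pos hα
  unfold gammaPDF
  positivity

lemma integral_gammaPDF_mul_exp_neg_mul {α β t : ℝ} (hα : 0 < α) (hβ : 0 ≤ β)
    (hβt : 0 < β + t) :
    ∫ u in Ioi 0, gammaPDF α β u * exp (-(t * u)) = (β / (β + t)) ^ α := by
  have hΓ := (Gamma_pos_of_pos hα).ne'
  have hpdf (u : ℝ) : gammaPDF α β u * exp (-(t * u)) =
      β ^ α / Gamma α * (u ^ (α - 1) * exp (-((β + t) * u))) := by
    rw [gammaPDF, show -((β + t) * u) = -β * u + -(t * u) by ring, exp_add]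
    ring
  simp_rw [hpdf]
  rw [integral_const_mul, integral_rpow_mul_exp_neg_mul_Ioi hα hβt, div_rpow hβ hβt.le,
    div_rpow zero_le_one hβt.le, one_rpow]
  field_simp

lemma integral_gammaPDF {α β : ℝ} (hα : 0 < α) (hβ : 0 < β) :
    ∫ u in Ioi 0, gammaPDF α β u = 1 := by
  simpa [div_self hβ.ne'] using
    integral_gammaPDF_mul_exp_neg_mul hα hβ.le (by simpa using hβ : 0 < β + 0)

lemma integrableOn_gammaPDF {α β : ℝ} (hα : 0 < α) (hβ : 0 < β) :
    IntegrableOn (gammaPDF α β) (Ioi 0) :=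
  Integrable.of_integral_ne_zero <| by simp [integral_gammaPDF hα hβ]

lemma integral_mul_exp_neg_mul_Ioi {c : ℝ} (hc : 0 < c) :
    ∫ v in Ioi 0, v * exp (-(c * v)) = (c ^ 2)⁻¹ := by
  have h := integral_rpow_mul_exp_neg_mul_Ioi two_pos hc
  rw [show (2 : ℝ) - 1 = 1 by norm_num] at h
  simpa [Gamma_two] using h

lemma integrableOn_mul_exp_neg_mul_Ioi {c : ℝ} (hc : 0 < c) :
    IntegrableOn (fun v ↦ v * exp (-(c * v))) (Ioi 0) :=
  Integrable.of_integral_ne_zero <| by simp [integral_mul_exp_neg_mul_Ioi hc, hc.ne']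

lemma integrableOn_exp_neg_mul_rpow_Ioi_one {z : ℝ} (hz : 0 < z) (s : ℝ) :
    IntegrableOn (fun t ↦ exp (-z * t) * t ^ s) (Ioi 1) := by
  have hmax : IntegrableOn (fun t ↦ t ^ max s 0 * exp (-z * t)) (Ioi 1) := by
    simpa using (integrableOn_rpow_mul_exp_neg_mul_rpow (p := 1)
      (lt_max_of_lt_right neg_one_lt_zero) one_pos hz).mono_set (Ioi_subset_Ioi zero_le_one)
  refine hmax.mono' (by fun_prop) ?_
  filter_upwards [ae_restrict_mem measurableSet_Ioi] with t (ht : 1 < t)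
  rw [norm_of_nonneg (by positivity), mul_comm]
  gcongr
  exacts [ht.le, le_max_left _ _]

lemma setIntegral_Ioi_comp_add_right {E : Type*} [NormedAddCommGroup E] [NormedSpace ℝ E]
    (g : ℝ → E) (a c : ℝ) :
    ∫ x in Ioi a, g (x + c) = ∫ x in Ioi (a + c), g x := by
  simpa using (measurePreserving_add_right volume c).setIntegral_preimage_emb
    (measurableEmbedding_addRight c) g (Ioi (a + c))

lemma integrableOn_gammaPDF_div_one_add_sq {α β : ℝ} (hα : 0 < α) (hβ : 0 < β) :
    IntegrableOn (fun u ↦ gammaPDF α β u / (1 + u) ^ 2) (Ioi 0) := by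
  simp_rw [div_eq_mul_inv]
  refine Integrable.mul_bdd (c := 1) (integrableOn_gammaPDF hα hβ) (by fun_prop) ?_
  filter_upwards [ae_restrict_mem measurableSet_Ioi] with u (hu : 0 < u)
  rw [norm_inv, norm_of_nonneg (by positivity)]
  exact inv_le_one_of_one_le₀ (by nlinarith)

lemma integral_gammaPDF_div_one_add_sq_eq_integral {α β : ℝ} (hα : 0 < α) (hβ : 0 < β) :
    ∫ u in Ioi 0, gammaPDF α β u / (1 + u) ^ 2 =
      β ^ 2 * ∫ v in Ioi 0, v * exp (-(β * v)) * (1 + v) ^ (-α) := by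
  set F : ℝ → ℝ → ℝ := fun u v ↦
    gammaPDF α β u * (β ^ 2 * (v * exp (-(β * (1 + u) * v))))
  have inner_v (u : ℝ) (hu : 0 < u) : ∫ v in Ioi 0, F u v = gammaPDF α β u / (1 + u) ^ 2 := by
    have h1u : 0 < 1 + u := by linarith
    rw [integral_const_mul, integral_const_mul, integral_mul_exp_neg_mul_Ioi (mul_pos hβ h1u)]
    field_simp
  have inner_u (v : ℝ) (hv : 0 < v) :
      ∫ u in Ioi 0, F u v = β ^ 2 * (v * exp (-(β * v)) * (1 + v) ^ (-α)) := by
    have h1v : 0 < 1 + v := by linarith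
    have hF (u : ℝ) : F u v = β ^ 2 * (v * exp (-(β * v))) *
        (gammaPDF α β u * exp (-(β * v * u))) := by
      simp only [F]
      rw [show -(β * (1 + u) * v) = -(β * v) + -(β * v * u) by ring, exp_add]
      ring
    simp_rw [hF]
    rw [integral_const_mul, integral_gammaPDF_mul_exp_neg_mul hα hβ.le (by positivity),
      show β / (β + β * v) = (1 + v)⁻¹ by field_simp, inv_rpow h1v.le, ← rpow_neg h1v.le]
    ring
  have hF : Integrable (Function.uncurry F) ((volume.restrict (Ioi 0)).prod
      (volume.restrict (Ioi 0))) := by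
    rw [integrable_prod_iff (by unfold F gammaPDF; fun_prop)]
    refine ⟨?_, ?_⟩
    · filter_upwards [ae_restrict_mem measurableSet_Ioi] with u (hu : 0 < u)
      simp only [Function.uncurry_apply_pair, F]
      exact ((integrableOn_mul_exp_neg_mul_Ioi (c := β * (1 + u)) (by positivity)).const_mul
        _).const_mul _
    · refine (integrableOn_gammaPDF_div_one_add_sq hα hβ).congr ?_
      filter_upwards [ae_restrict_mem measurableSet_Ioi] with u (hu : 0 < u)
      rw [← inner_v u hu]
      refine setIntegral_congr_fun measurableSet_Ioi fun v (hv : 0 < v) ↦ ?_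
      have := gammaPDF_nonneg hα hβ.le hu.le
      exact (norm_of_nonneg (by positivity)).symm
  calc ∫ u in Ioi 0, gammaPDF α β u / (1 + u) ^ 2
      = ∫ u in Ioi 0, ∫ v in Ioi 0, F u v := setIntegral_congr_fun measurableSet_Ioi
          fun u hu ↦ (inner_v u hu).symm
    _ = ∫ v in Ioi 0, ∫ u in Ioi 0, F u v := integral_integral_swap hF
    _ = ∫ v in Ioi 0, β ^ 2 * (v * exp (-(β * v)) * (1 + v) ^ (-α)) :=
          setIntegral_congr_fun measurableSet_Ioi inner_u
    _ = _ := integral_const_mul _ _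

lemma expInt_recurrence {z : ℝ} (hz : 0 < z) (p : ℝ) :
    z * expInt p z + p * expInt (p + 1) z = exp (-z) := by
  have hderiv (t : ℝ) (ht : t ∈ Ici 1) : HasDerivAt (fun t ↦ -(exp (-z * t) * t ^ (-p)))
      (z * (exp (-z * t) * t ^ (-p)) + p * (exp (-z * t) * t ^ (-(p + 1)))) t := by
    have ht0 : t ≠ 0 := by linarith [mem_Ici.mp ht]
    refine (((hasDerivAt_id t).const_mul (-z)).exp.mul
      (hasDerivAt_rpow_const (p := -p) (Or.inl ht0))).neg.congr_deriv ?_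
    rw [show -(p + 1) = -p - 1 by ring]
    simp only [id]
    ring
  have hint (s : ℝ) := integrableOn_exp_neg_mul_rpow_Ioi_one hz s
  have hlim : Tendsto (fun t ↦ -(exp (-z * t) * t ^ (-p))) atTop (𝓝 0) := by
    simpa [mul_comm] using (tendsto_rpow_mul_exp_neg_mul_atTop_nhds_zero (-p) z hz).neg
  have h := integral_Ioi_of_hasDerivAt_of_tendsto' hderiv
    (((hint _).const_mul z).add ((hint _).const_mul p)) hlim
  rw [integral_add ((hint _).const_mul z) ((hint _).const_mul p), integral_const_mul,
    integral_const_mul] at h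
  simpa [expInt] using h

lemma integral_mul_exp_neg_mul_one_add_rpow_neg {α β : ℝ} (hβ : 0 < β) :
    ∫ v in Ioi 0, v * exp (-(β * v)) * (1 + v) ^ (-α) =
      exp β * (expInt (α - 1) β - expInt α β) := by
  have hshift := setIntegral_Ioi_comp_add_right
    (fun t ↦ exp β * (exp (-β * t) * t ^ (-(α - 1)) - exp (-β * t) * t ^ (-α))) 0 1
  rw [zero_add] at hshift
  rw [expInt, expInt, ← integral_sub (integrableOn_exp_neg_mul_rpow_Ioi_one hβ _)
    (integrableOn_exp_neg_mul_rpow_Ioi_one hβ _), ← integral_const_mul, ← hshift]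
  refine setIntegral_congr_fun measurableSet_Ioi fun v (hv : 0 < v) ↦ ?_
  have hv1 : 0 < v + 1 := by linarith
  rw [show -(α - 1) = 1 + -α by ring, rpow_add hv1, rpow_one, add_comm v 1,
    show -β * (1 + v) = -(β * v) + -β by ring, exp_add, exp_neg β]
  field_simp
  ring

lemma integral_gammaPDF_div_one_add_sq {α β : ℝ} (hα : 0 < α) (hβ : 0 < β) :
    ∫ u in Ioi 0, gammaPDF α β u / (1 + u) ^ 2 =
      β - β * exp β * (α + β - 1) * expInt α β := by
  have hrec := expInt_recurrence hβ (α - 1)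
  rw [sub_add_cancel] at hrec
  have hexp : exp β * exp (-β) = 1 := by rw [← exp_add, add_neg_cancel, exp_zero]
  rw [integral_gammaPDF_div_one_add_sq_eq_integral hα hβ,
    integral_mul_exp_neg_mul_one_add_rpow_neg hβ]
  linear_combination (β * exp β) * hrec + β * hexp

/-- If `γ ~ Γ(α, β)` with `α, β > 0`, then
`∫₀^∞ (1 - 1/(2(1+u)²)) f_γ(u) du = (1/2)(2 - β + e^β β (α + β - 1) E_α(β))`. -/
theorem expectation_approx_dispersion_gamma (α β : ℝ) (hα : 0 < α) (hβ : 0 < β) :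
    (∫ u in Set.Ioi (0 : ℝ), (1 - 1 / (2 * (1 + u) ^ 2)) * gammaPDF α β u) =
      1 / 2 * (2 - β + Real.exp β * β * (α + β - 1) * expInt α β) := by
  calc ∫ u in Ioi 0, (1 - 1 / (2 * (1 + u) ^ 2)) * gammaPDF α β u
      = ∫ u in Ioi 0, (gammaPDF α β u - 1 / 2 * (gammaPDF α β u / (1 + u) ^ 2)) := by
        congr 1 with u
        rw [one_div, mul_inv]
        ring
    _ = (∫ u in Ioi 0, gammaPDF α β u) -
          1 / 2 * ∫ u in Ioi 0, gammaPDF α β u / (1 + u) ^ 2 := by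
        rw [integral_sub (integrableOn_gammaPDF hα hβ)
          ((integrableOn_gammaPDF_div_one_add_sq hα hβ).const_mul _), integral_const_mul]
    _ = _ := by
        rw [integral_gammaPDF hα hβ, integral_gammaPDF_div_one_add_sq hα hβ]
        ring
end

section
/- The function f(γ) = log₂(1+γ)/√(1 - 1/(1+γ)²) is monotonically nondecreasing on (0, ∞). -/
/-!
Substitute `t = log (1 + γ)`: then `1 / (1 + γ) ^ 2 = exp (-2t)` and, up to the factor `log 2`,
the function becomes `t / √(1 - exp (-2t))`. Convexity of `exp` makes the secant slope
`(1 - exp (-x)) / x` decreasing on `(0, ∞)`, i.e. `t / (1 - exp (-2t))` is increasing, and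
multiplying by the increasing factor `t` shows that the square `t² / (1 - exp (-2t))` is
increasing as well.
-/

open Real Set

theorem antitoneOn_one_sub_exp_neg_div : AntitoneOn (fun x : ℝ => (1 - exp (-x)) / x) (Ioi 0) := by
  intro a ha b hb hab
  have hslope := convexOn_exp.secant_mono (a := 0) (x := -b) (y := -a) (mem_univ _) (mem_univ _)
    (mem_univ _) (by linarith [hb.out]) (by linarith [ha.out]) (by linarith)
  simpa only [exp_zero, sub_zero, div_neg, ← neg_div, neg_sub] using hslope

theorem monotoneOn_div_sqrt_one_sub_exp_neg_two_mul :
    MonotoneOn (fun t : ℝ => t / √(1 - exp (-(2 * t)))) (Ioi 0) := by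
  intro a ha b hb hab
  have ha' : 0 < a := ha
  have hb' : 0 < b := hb
  have hp : 0 < 1 - exp (-(2 * a)) := sub_pos.2 (exp_lt_one_iff.2 (by linarith))
  have hq : 0 < 1 - exp (-(2 * b)) := sub_pos.2 (exp_lt_one_iff.2 (by linarith))
  have hslope := antitoneOn_one_sub_exp_neg_div (mul_pos two_pos ha') (mul_pos two_pos hb')
    (by linarith)
  rw [div_le_div_iff₀ (by positivity) (by positivity)] at hslope
  have hsq : a ^ 2 * (1 - exp (-(2 * b))) ≤ b ^ 2 * (1 - exp (-(2 * a))) := by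
    nlinarith [mul_le_mul_of_nonneg_left hslope ha'.le,
      mul_le_mul_of_nonneg_right hab (mul_nonneg hb'.le hp.le)]
  rw [div_le_div_iff₀ (by positivity) (by positivity)]
  simpa [Real.sqrt_mul (sq_nonneg _), Real.sqrt_sq, ha'.le, hb'.le] using Real.sqrt_le_sqrt hsq

theorem one_div_sq_eq_exp_neg_two_mul_log {u : ℝ} (hu : 0 < u) :
    1 / u ^ 2 = exp (-(2 * log u)) := by
  rw [exp_neg, ← exp_log (pow_pos hu 2), log_pow, Nat.cast_ofNat, one_div]

/-- The ratio `f(γ) = log₂(1+γ)/√(1 - 1/(1+γ)²)` of Shannon capacity to the square root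
of the channel dispersion is monotonically nondecreasing on `(0, ∞)`. -/
theorem capacity_over_sqrt_dispersion_monotone :
    MonotoneOn (fun γ : ℝ => Real.logb 2 (1 + γ) / Real.sqrt (1 - 1 / (1 + γ) ^ 2))
      (Set.Ioi 0) := by
  have hlog : MonotoneOn (fun γ : ℝ => log (1 + γ)) (Ioi 0) := fun a ha b _ hab =>
    log_le_log (by linarith [ha.out]) (by linarith)
  have hmaps : MapsTo (fun γ : ℝ => log (1 + γ)) (Ioi 0) (Ioi 0) := fun γ hγ =>
    log_pos (by linarith [hγ.out])
  refine ((monotone_div_right_of_nonneg (log_pos one_lt_two).le).comp_monotoneOn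
    (monotoneOn_div_sqrt_one_sub_exp_neg_two_mul.comp hlog hmaps)).congr fun γ hγ => ?_
  simp only [Function.comp, logb, div_right_comm _ (log 2),
    one_div_sq_eq_exp_neg_two_mul_log (by linarith [hγ.out] : (0 : ℝ) < 1 + γ)]
end
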